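/- Let m > 3. Let Δ' = {e_i − e_j : 1 ≤ i ≠ j ≤ 2m} ⊂ ℝ^{2m} (the root system of gl(m|m)), let U ⊆ ℝ^{2m} be the subspace spanned by e₁ + ⋯ + e_m and e_{m+1} + ⋯ + e_{2m}, let V = ℝ^{2m}/U with quotient map π, and let Δ = π(Δ') (the root system of psl(m|m)). Then a subset P ⊆ Δ is parabolic if and only if P = π(P') for some principal parabolic subset P' of Δ'. -/

import Mathlib

/-!
A parabolic subset `P` of `Δ` pulls back to the parabolic subset `Δ' ∩ π⁻¹ P` of `Δ'`, and for
the root system of `gl(n)` every parabolic subset is principal: `i ≽ j :⇔ i = j ∨ eᵢ - eⱼ ∈ P`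
is a total preorder, and weights with `i ≽ j ⇔ wⱼ ≤ wᵢ` give the functional `∑ wᵢ xᵢ`.
Conversely a principal parabolic subset is parabolic, and its image stays parabolic because
for `m > 3` the map `π` reflects sums of roots: if `π α + π β = π γ` then `α + β - γ ∈ U` is an
integer vector whose sum over each block of `m` coordinates is at most `3` in absolute value,
which forces it to vanish.
-/

/-- A subset `P` of `Δ` is *parabolic* if `P ∪ (−P) = Δ` and `P` is closed. -/
def IsParabolicIn {V : Type*} [AddCommGroup V] (Δ P : Set V) : Prop :=
  P ∪ (-P) = Δ ∧ ∀ α ∈ P, ∀ β ∈ P, α + β ∈ Δ → α + β ∈ P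

/-- `P` is *principal parabolic* in `Δ` if `P = {α ∈ Δ | λ α ≥ 0}` for some linear
functional `λ`. -/
def IsPrincipalParabolicIn {V : Type*} [AddCommGroup V] [Module ℝ V] (Δ P : Set V) : Prop :=
  ∃ l : V →ₗ[ℝ] ℝ, P = {α ∈ Δ | 0 ≤ l α}

/-- The standard basis vector `e i` of `ℝ^{2m}`. -/
def stdBasis (m : ℕ) (i : Fin (2 * m)) : Fin (2 * m) → ℝ := Pi.single i 1

/-- The subspace `U` of `ℝ^{2m}` spanned by `e₁ + ⋯ + e_m` and `e_{m+1} + ⋯ + e_{2m}`. -/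
def Upsl (m : ℕ) : Submodule ℝ (Fin (2 * m) → ℝ) :=
  Submodule.span ℝ
    ({fun i : Fin (2 * m) => if (i : ℕ) < m then (1 : ℝ) else 0,
      fun i : Fin (2 * m) => if (i : ℕ) < m then (0 : ℝ) else 1} : Set (Fin (2 * m) → ℝ))

/-- The root system of `gl(m|m)`: all `e_i − e_j`, `i ≠ j`. -/
def glRoots (m : ℕ) : Set (Fin (2 * m) → ℝ) :=
  {x | ∃ i j : Fin (2 * m), i ≠ j ∧ x = stdBasis m i - stdBasis m j}

open Finset

section Parabolic

variable {V W : Type*} [AddCommGroup V] [AddCommGroup W]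

lemma IsParabolicIn.subset {Δ P : Set V} (h : IsParabolicIn Δ P) : P ⊆ Δ :=
  h.1 ▸ Set.subset_union_left

lemma IsPrincipalParabolicIn.isParabolicIn [Module ℝ V] {Δ P : Set V}
    (hΔ : ∀ α ∈ Δ, -α ∈ Δ) (h : IsPrincipalParabolicIn Δ P) : IsParabolicIn Δ P := by
  obtain ⟨l, rfl⟩ := h
  refine ⟨Set.ext fun α => ⟨?_, fun hα => ?_⟩, ?_⟩
  · rintro (⟨hα, -⟩ | ⟨hα, -⟩)
    exacts [hα, neg_neg α ▸ hΔ _ hα]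
  · rcases le_total 0 (l α) with hl | hl
    · exact Or.inl ⟨hα, hl⟩
    · exact Or.inr ⟨hΔ α hα, by rw [map_neg]; linarith⟩
  · rintro α ⟨-, hα⟩ β ⟨-, hβ⟩ hαβ
    exact ⟨hαβ, by rw [map_add]; exact add_nonneg hα hβ⟩

variable {F : Type*} [FunLike F V W] [AddMonoidHomClass F V W]

lemma IsParabolicIn.inter_preimage (f : F) {Δ : Set V} {P : Set W}
    (hΔ : ∀ α ∈ Δ, -α ∈ Δ) (h : IsParabolicIn (f '' Δ) P) : IsParabolicIn Δ (Δ ∩ f ⁻¹' P) := by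
  refine ⟨Set.ext fun α => ⟨?_, fun hα => ?_⟩, ?_⟩
  · rintro (⟨hα, -⟩ | ⟨hα, -⟩)
    exacts [hα, neg_neg α ▸ hΔ _ hα]
  · have hfα : f α ∈ P ∪ -P := h.1 ▸ Set.mem_image_of_mem f hα
    rcases hfα with hP | hP
    · exact Or.inl ⟨hα, hP⟩
    · exact Or.inr ⟨hΔ α hα, by rwa [Set.mem_preimage, map_neg]⟩
  · rintro α ⟨-, hα⟩ β ⟨-, hβ⟩ hαβ
    refine ⟨hαβ, ?_⟩
    rw [Set.mem_preimage, map_add]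
    exact h.2 _ hα _ hβ (map_add f α β ▸ Set.mem_image_of_mem f hαβ)

lemma IsParabolicIn.image (f : F) {Δ P : Set V}
    (hf : ∀ α ∈ Δ, ∀ β ∈ Δ, ∀ γ ∈ Δ, f α + f β = f γ → α + β = γ)
    (h : IsParabolicIn Δ P) : IsParabolicIn (f '' Δ) (f '' P) := by
  refine ⟨?_, ?_⟩
  · rw [← h.1, Set.image_union, Set.image_neg_of_apply_neg_eq_neg fun α _ => map_neg f α]
  · rintro _ ⟨α, hα, rfl⟩ _ ⟨β, hβ, rfl⟩ ⟨γ, hγ, hfγ⟩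
    have hαβ := hf α (h.subset hα) β (h.subset hβ) γ hγ hfγ.symm
    exact ⟨α + β, h.2 α hα β hβ (hαβ ▸ hγ), map_add f α β⟩

end Parabolic

lemma exists_nat_weight_of_total_of_trans {ι : Type*} [Fintype ι] {R : ι → ι → Prop}
    (total : ∀ i j, R i j ∨ R j i) (trans : ∀ i j k, R i j → R j k → R i k) :
    ∃ w : ι → ℕ, ∀ i j, R i j ↔ w j ≤ w i := by
  classical
  refine ⟨fun i => #{k | R i k}, fun i j => ⟨fun hij => card_le_card fun k hk => ?_, fun hle => ?_⟩⟩
  · simp only [mem_filter, mem_univ, true_and] at hk ⊢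
    exact trans i j k hij hk
  · by_contra hij
    have hji := (total i j).resolve_left hij
    have hlt : #{k | R i k} < #{k | R j k} := by
      refine card_lt_card ⟨fun k hk => ?_, fun hsub => hij ?_⟩
      · simp only [mem_filter, mem_univ, true_and] at hk ⊢
        exact trans j i k hji hk
      · have hjj : R j j := (total j j).elim id id
        simpa using hsub (by simpa using hjj)
    exact hlt.not_ge hle

section Roots

variable {m : ℕ}

lemma neg_mem_glRoots {α : Fin (2 * m) → ℝ} (hα : α ∈ glRoots m) : -α ∈ glRoots m := by
  obtain ⟨i, j, hij, rfl⟩ := hα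
  exact ⟨j, i, hij.symm, by abel⟩

lemma IsParabolicIn.isPrincipalParabolicIn_glRoots {P : Set (Fin (2 * m) → ℝ)}
    (h : IsParabolicIn (glRoots m) P) : IsPrincipalParabolicIn (glRoots m) P := by
  set R : Fin (2 * m) → Fin (2 * m) → Prop := fun i j => i = j ∨ stdBasis m i - stdBasis m j ∈ P
  have total : ∀ i j, R i j ∨ R j i := by
    intro i j
    rcases eq_or_ne i j with hij | hij
    · exact Or.inl (Or.inl hij)
    have hroot : stdBasis m i - stdBasis m j ∈ P ∪ -P := h.1 ▸ ⟨i, j, hij, rfl⟩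
    rcases hroot with hP | hP
    · exact Or.inl (Or.inr hP)
    · exact Or.inr (Or.inr (by rwa [Set.mem_neg, neg_sub] at hP))
  have trans : ∀ i j k, R i j → R j k → R i k := by
    rintro i j k (rfl | hij) (rfl | hjk)
    · exact Or.inl rfl
    · exact Or.inr hjk
    · exact Or.inr hij
    rcases eq_or_ne i k with hik | hik
    · exact Or.inl hik
    have hsum : (stdBasis m i - stdBasis m j) + (stdBasis m j - stdBasis m k) =
        stdBasis m i - stdBasis m k := by abel
    exact Or.inr (hsum ▸ h.2 _ hij _ hjk (hsum ▸ ⟨i, k, hik, rfl⟩))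
  obtain ⟨w, hw⟩ := exists_nat_weight_of_total_of_trans total trans
  have hl : ∀ i j, Fintype.linearCombination ℝ (fun k => (w k : ℝ))
      (stdBasis m i - stdBasis m j) = w i - w j := by
    intro i j
    simp [stdBasis, Fintype.linearCombination_apply_single]
  refine ⟨Fintype.linearCombination ℝ (fun k => (w k : ℝ)), Set.ext fun α => ⟨fun hα => ?_, ?_⟩⟩
  · obtain ⟨i, j, hij, rfl⟩ := h.subset hα
    refine ⟨⟨i, j, hij, rfl⟩, ?_⟩
    rw [hl, sub_nonneg]
    exact_mod_cast (hw i j).1 (Or.inr hα)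
  · rintro ⟨⟨i, j, hij, rfl⟩, hα⟩
    rw [hl, sub_nonneg] at hα
    exact ((hw i j).2 (by exact_mod_cast hα)).resolve_left hij

lemma abs_sum_le_one_of_mem_glRoots {α : Fin (2 * m) → ℝ} (hα : α ∈ glRoots m)
    (s : Finset (Fin (2 * m))) : |∑ i ∈ s, α i| ≤ 1 := by
  obtain ⟨i, j, -, rfl⟩ := hα
  simp only [stdBasis, Pi.sub_apply, sum_sub_distrib, sum_pi_single']
  split_ifs <;> norm_num

lemma exists_intCast_eq_of_mem_glRoots {α : Fin (2 * m) → ℝ} (hα : α ∈ glRoots m)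
    (p : Fin (2 * m)) : ∃ k : ℤ, α p = k := by
  obtain ⟨i, j, -, rfl⟩ := hα
  refine ⟨(Pi.single i 1 - Pi.single j 1 : Fin (2 * m) → ℤ) p, ?_⟩
  simp only [stdBasis, Pi.sub_apply, Pi.single_apply]
  split_ifs <;> norm_num

lemma eq_zero_of_mem_Upsl (hm : 3 < m) {u : Fin (2 * m) → ℝ} (hu : u ∈ Upsl m)
    (hint : ∀ p, ∃ k : ℤ, u p = k) (hsum : ∀ s : Finset (Fin (2 * m)), |∑ i ∈ s, u i| ≤ 3) :
    u = 0 := by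
  have eq_zero_of_const_on_block : ∀ (s : Finset (Fin (2 * m))) (z : ℝ),
      #s = m → (∀ i ∈ s, u i = z) → z = 0 := by
    intro s z hs hz
    obtain ⟨p, hp⟩ : s.Nonempty := card_pos.1 (by omega)
    obtain ⟨k, hk⟩ := hint p
    have hmk := hsum s
    rw [sum_congr rfl hz, sum_const, hs, nsmul_eq_mul, ← hz p hp, hk] at hmk
    have hmk' : |(m : ℤ) * k| ≤ 3 := by exact_mod_cast hmk
    rw [abs_mul, abs_of_nonneg (by positivity)] at hmk'
    have hk0 : k = 0 := Int.abs_lt_one_iff.1 (by nlinarith [abs_nonneg k])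
    rw [← hz p hp, hk, hk0, Int.cast_zero]
  obtain ⟨x, y, hxy⟩ := Submodule.mem_span_pair.1 hu
  have hx : x = 0 := eq_zero_of_const_on_block (Iio ⟨m, by omega⟩) x (Fin.card_Iio _)
    fun i hi => by simp [← hxy, Fin.lt_def.1 (mem_Iio.1 hi)]
  have hy : y = 0 := eq_zero_of_const_on_block (Ici ⟨m, by omega⟩) y (by simp; omega)
    fun i hi => by simp [← hxy, not_lt.2 (Fin.le_def.1 (mem_Ici.1 hi))]
  ext i
  simp [← hxy, hx, hy]

lemma add_eq_of_mkQ_add_mkQ_eq (hm : 3 < m) {α β γ : Fin (2 * m) → ℝ} (hα : α ∈ glRoots m)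
    (hβ : β ∈ glRoots m) (hγ : γ ∈ glRoots m)
    (h : (Upsl m).mkQ α + (Upsl m).mkQ β = (Upsl m).mkQ γ) : α + β = γ := by
  rw [← map_add, Submodule.mkQ_apply, Submodule.mkQ_apply, Submodule.Quotient.eq] at h
  refine sub_eq_zero.1 (eq_zero_of_mem_Upsl hm h (fun p => ?_) (fun s => ?_))
  · obtain ⟨a, ha⟩ := exists_intCast_eq_of_mem_glRoots hα p
    obtain ⟨b, hb⟩ := exists_intCast_eq_of_mem_glRoots hβ p
    obtain ⟨c, hc⟩ := exists_intCast_eq_of_mem_glRoots hγ p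
    exact ⟨a + b - c, by simp [ha, hb, hc]⟩
  · have ha := abs_le.1 (abs_sum_le_one_of_mem_glRoots hα s)
    have hb := abs_le.1 (abs_sum_le_one_of_mem_glRoots hβ s)
    have hc := abs_le.1 (abs_sum_le_one_of_mem_glRoots hγ s)
    simp only [Pi.sub_apply, Pi.add_apply, sum_sub_distrib, sum_add_distrib]
    rw [abs_le]
    constructor <;> linarith

end Roots

theorem psl_parabolic_iff_image_principal_general (m : ℕ) (hm : 3 < m)
    (P : Set ((Fin (2 * m) → ℝ) ⧸ Upsl m)) :
    IsParabolicIn ((Upsl m).mkQ '' glRoots m) P ↔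
      ∃ P' : Set (Fin (2 * m) → ℝ),
        IsPrincipalParabolicIn (glRoots m) P' ∧ P = (Upsl m).mkQ '' P' := by
  constructor
  · intro h
    refine ⟨glRoots m ∩ (Upsl m).mkQ ⁻¹' P,
      (h.inter_preimage _ fun _ => neg_mem_glRoots).isPrincipalParabolicIn_glRoots, ?_⟩
    rw [Set.image_inter_preimage, Set.inter_eq_right.2 h.subset]
  · rintro ⟨P', hP', rfl⟩
    exact (hP'.isParabolicIn fun _ => neg_mem_glRoots).image _
      fun α hα β hβ γ hγ => add_eq_of_mkQ_add_mkQ_eq hm hα hβ hγ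

/-- For `m > 3`, a subset `P` of the root system `Δ` of `psl(m|m)` (the image of
the roots `Δ'` of `gl(m|m)` in `ℝ^{2m}/U`) is parabolic if and only if `P` is the
image of a principal parabolic subset of `Δ'`. -/
theorem psl_parabolic_iff_image_principal (m : ℕ) (hm : 3 < m)
    (P : Set ((Fin (2 * m) → ℝ) ⧸ Upsl m)) (hP : P ⊆ (Upsl m).mkQ '' glRoots m) :
    IsParabolicIn ((Upsl m).mkQ '' glRoots m) P ↔
      ∃ P' : Set (Fin (2 * m) → ℝ),
        IsPrincipalParabolicIn (glRoots m) P' ∧ P = (Upsl m).mkQ '' P' :=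
  psl_parabolic_iff_image_principal_general m hm P
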